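/- Given a short exact sequence 0 → M' → M → M'' → 0 of finitely generated modules over a commutative Noetherian ring, there exist choices of Auslander duals such that the sequence 0 → (M'')* → M* → (M')* → D(M'') → D(M) → D(M') → 0 is exact. -/

import Mathlib

open CategoryTheory

universe u

variable (R : Type u) [CommRing R]

/-- The `i`-th Ext module of two modules, as an object of `ModuleCat R`. -/
noncomputable def extM (M N : ModuleCat.{u} R) (i : ℕ) : ModuleCat.{u} R :=
  ((Ext R (ModuleCat.{u} R) i).obj (Opposite.op M)).obj N

/-- `D` is an Auslander dual of `M`: `D ≅ Coker(u* : P0* → P1*)` for some finite projective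
presentation `P1 →u P0 → M → 0`. -/
def IsAuslanderDual (M D : ModuleCat.{u} R) : Prop :=
  ∃ (P1 P0 : ModuleCat.{u} R) (uu : P1 →ₗ[R] P0) (f : P0 →ₗ[R] M),
    Module.Finite R P1 ∧ Module.Projective R P1 ∧
    Module.Finite R P0 ∧ Module.Projective R P0 ∧
    Function.Surjective f ∧ Function.Exact uu f ∧
    Nonempty (D ≃ₗ[R] (Module.Dual R P1 ⧸ LinearMap.range uu.dualMap))

/-- Gorenstein dimension zero: reflexive with all positive Ext of `M` and `M*` into `R`
vanishing. -/
def GdimZero (M : ModuleCat.{u} R) : Prop :=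
  Module.IsReflexive R M ∧ ∀ i : ℕ, 1 ≤ i →
    Subsingleton (extM R M (ModuleCat.of R R) i) ∧
    Subsingleton (extM R (ModuleCat.of R (Module.Dual R M)) (ModuleCat.of R R) i)

/-- `GdimLE R k M` : the Gorenstein dimension of `M` is at most `k`. -/
def GdimLE : ℕ → ModuleCat.{u} R → Prop
  | 0, M => GdimZero R M
  | (k+1), M => ∃ (N : ModuleCat.{u} R) (f : N →ₗ[R] M),
      Function.Surjective f ∧ GdimZero R N ∧
      GdimLE k (ModuleCat.of R (LinearMap.ker f))

/-- The Gorenstein dimension, as an extended natural number. -/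
noncomputable def gdim (M : ModuleCat.{u} R) : ℕ∞ :=
  sInf {n : ℕ∞ | ∃ k : ℕ, n = k ∧ GdimLE R k M}

/-- `PdLE R k M` : projective dimension at most `k` (via finite projective resolutions). -/
def PdLE : ℕ → ModuleCat.{u} R → Prop
  | 0, M => Module.Projective R M
  | (k+1), M => ∃ (P : ModuleCat.{u} R) (f : P →ₗ[R] M),
      Module.Finite R P ∧ Module.Projective R P ∧ Function.Surjective f ∧
      PdLE k (ModuleCat.of R (LinearMap.ker f))

noncomputable def pd (M : ModuleCat.{u} R) : ℕ∞ :=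
  sInf {n : ℕ∞ | ∃ k : ℕ, n = k ∧ PdLE R k M}

/-- `M` is a `k`-th syzygy: there is an exact sequence `0 → M → P₀ → ⋯ → P_{k-1}` with all
`P_j` finitely generated projective. -/
def IsSyzygy : ℕ → ModuleCat.{u} R → Prop
  | 0, _ => True
  | (k+1), M => ∃ (P : ModuleCat.{u} R) (f : M →ₗ[R] P),
      Module.Finite R P ∧ Module.Projective R P ∧ Function.Injective f ∧
      IsSyzygy k (ModuleCat.of R (P ⧸ LinearMap.range f))

/-- `M` is `k`-torsionless: `Ext^i(D(M), R) = 0` for `1 ≤ i ≤ k`. -/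
def Torsionless (k : ℕ) (M : ModuleCat.{u} R) : Prop :=
  ∃ D : ModuleCat.{u} R, IsAuslanderDual R M D ∧
    ∀ i : ℕ, 1 ≤ i → i ≤ k → Subsingleton (extM R D (ModuleCat.of R R) i)

/-- The depth of a module over a local ring, via vanishing of `Ext^i(k, M)`. -/
noncomputable def rdepth (A : Type u) [CommRing A] [IsLocalRing A] (N : ModuleCat.{u} A) : ℕ∞ :=
  sInf {n : ℕ∞ | ∃ i : ℕ, n = i ∧
    ¬ Subsingleton (extM A (ModuleCat.of A (IsLocalRing.ResidueField A)) N i)}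

/-- Injective dimension at most `k`. -/
def IdLE : ℕ → ModuleCat.{u} R → Prop
  | 0, M => Module.Injective R M
  | (k+1), M => ∃ (I : ModuleCat.{u} R) (f : M →ₗ[R] I),
      Module.Injective R I ∧ Function.Injective f ∧
      IdLE k (ModuleCat.of R (I ⧸ LinearMap.range f))


/-! Choose finite free presentations `u' : P₁' → P₀'` of `M'` and `u'' : P₁'' → P₀''` of `M''`.
The horseshoe construction presents `M` by `P₁' × P₁'' → P₀' × P₀''` with the triangular matrix
`[[u', h], [0, u'']]`, so the three presentations form a degreewise split short exact sequence of
two-term complexes. Its dual is again degreewise split exact, with kernels `M''*, M*, M'*` (the dual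
is left exact) and cokernels the Auslander duals; the snake lemma then gives the six-term sequence. -/

open LinearMap Function Module

section Horseshoe

variable {R : Type*} [Ring R]
  {M' M M'' P₀' P₁' P₀'' P₁'' : Type*}
  [AddCommGroup M'] [Module R M'] [AddCommGroup M] [Module R M]
  [AddCommGroup M''] [Module R M''] [AddCommGroup P₀'] [Module R P₀']
  [AddCommGroup P₁'] [Module R P₁'] [AddCommGroup P₀''] [Module R P₀'']
  [AddCommGroup P₁''] [Module R P₁'']
  {i : M' →ₗ[R] M} {p : M →ₗ[R] M''}
  {u' : P₁' →ₗ[R] P₀'} {f' : P₀' →ₗ[R] M'} {u'' : P₁'' →ₗ[R] P₀''} {f'' : P₀'' →ₗ[R] M''}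
  {g : P₀'' →ₗ[R] M} {h : P₁'' →ₗ[R] P₀'}

variable (u' u'' h) in
def horseshoeMap : P₁' × P₁'' →ₗ[R] P₀' × P₀'' :=
  u'.prodMap u'' + inl R P₀' P₀'' ∘ₗ h ∘ₗ snd R P₁' P₁''

lemma horseshoeMap_apply (x : P₁' × P₁'') :
    horseshoeMap u' u'' h x = (u' x.1 + h x.2, u'' x.2) := by
  simp [horseshoeMap]

lemma horseshoeMap_comp_inl :
    horseshoeMap u' u'' h ∘ₗ inl R P₁' P₁'' = inl R P₀' P₀'' ∘ₗ u' := by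
  ext x <;> simp [horseshoeMap_apply]

lemma snd_comp_horseshoeMap :
    snd R P₀' P₀'' ∘ₗ horseshoeMap u' u'' h = u'' ∘ₗ snd R P₁' P₁'' := by
  ext x <;> simp [horseshoeMap_apply]

lemma exists_horseshoe_lifts [Projective R P₀''] [Projective R P₁'']
    (hip : Exact i p) (hp : Surjective p) (hf' : Surjective f') (huf'' : Exact u'' f'') :
    ∃ (g : P₀'' →ₗ[R] M) (h : P₁'' →ₗ[R] P₀'), p ∘ₗ g = f'' ∧ i ∘ₗ f' ∘ₗ h + g ∘ₗ u'' = 0 := by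
  obtain ⟨g, hg⟩ := projective_lifting_property p f'' hp
  have hrange : ∀ x, -g (u'' x) ∈ range (i ∘ₗ f') := by
    intro x
    have hpg : p (g (u'' x)) = 0 := by
      rw [← LinearMap.comp_apply, hg, huf''.apply_apply_eq_zero]
    obtain ⟨y, hy⟩ := (hip _).mp hpg
    obtain ⟨z, rfl⟩ := hf' y
    exact ⟨-z, by simp [hy]⟩
  obtain ⟨h, hh⟩ := projective_lifting_property (i ∘ₗ f').rangeRestrict
    ((-(g ∘ₗ u'')).codRestrict _ hrange) (i ∘ₗ f').surjective_rangeRestrict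
  refine ⟨g, h, hg, ?_⟩
  ext x
  simpa [add_eq_zero_iff_eq_neg] using congr(($hh x : M))

lemma surjective_coprod_of_comp_eq (hip : Exact i p) (hf' : Surjective f') (hf'' : Surjective f'')
    (hg : p ∘ₗ g = f'') : Surjective ((i ∘ₗ f').coprod g) := by
  intro m
  obtain ⟨b, hb⟩ := hf'' (p m)
  have hpb : p (m - g b) = 0 := by rw [map_sub, ← LinearMap.comp_apply, hg, hb, sub_self]
  obtain ⟨m', hm'⟩ := (hip _).mp hpb
  obtain ⟨a, rfl⟩ := hf' m'
  exact ⟨(a, b), by simp [hm']⟩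

lemma exact_horseshoeMap_coprod (hi : Injective i) (hip : Exact i p) (huf' : Exact u' f')
    (huf'' : Exact u'' f'') (hg : p ∘ₗ g = f'') (hh : i ∘ₗ f' ∘ₗ h + g ∘ₗ u'' = 0) :
    Exact (horseshoeMap u' u'' h) ((i ∘ₗ f').coprod g) := by
  have hh' : ∀ x, i (f' (h x)) = -g (u'' x) := fun x ↦ eq_neg_of_add_eq_zero_left congr($hh x)
  refine exact_of_comp_of_mem_range ?_ ?_
  · ext x <;> simp [horseshoeMap_apply, hh', huf'.apply_apply_eq_zero]
  · rintro ⟨a, b⟩ hab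
    replace hab : i (f' a) + g b = 0 := by simpa using hab
    have hb : f'' b = 0 := by
      simpa [← hg, hip.apply_apply_eq_zero] using congr(p $hab)
    obtain ⟨c, rfl⟩ := (huf'' b).mp hb
    have ha : f' (a - h c) = 0 := hi <| by
      rw [map_sub, map_sub, hh', eq_neg_of_add_eq_zero_left hab, sub_self, map_zero]
    obtain ⟨d, hd⟩ := (huf' _).mp ha
    exact ⟨(d, c), by simp [horseshoeMap_apply, hd]⟩

end Horseshoe

section Cokernel

variable {R : Type*} [Ring R] {A A' B B' : Type*}
  [AddCommGroup A] [Module R A] [AddCommGroup A'] [Module R A']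
  [AddCommGroup B] [Module R B] [AddCommGroup B'] [Module R B']

lemma range_le_comap_range {a : A →ₗ[R] B} {b : A' →ₗ[R] B'} {f : A →ₗ[R] A'} {g : B →ₗ[R] B'}
    (hcomm : g ∘ₗ a = b ∘ₗ f) : range a ≤ (range b).comap g := by
  rintro _ ⟨x, rfl⟩
  exact ⟨f x, by rw [← LinearMap.comp_apply, ← hcomm, LinearMap.comp_apply]⟩

def cokerMap (a : A →ₗ[R] B) (b : A' →ₗ[R] B') {f : A →ₗ[R] A'} (g : B →ₗ[R] B')
    (hcomm : g ∘ₗ a = b ∘ₗ f) : (B ⧸ range a) →ₗ[R] (B' ⧸ range b) :=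
  (range a).mapQ (range b) g (range_le_comap_range hcomm)

lemma cokerMap_comp_mkQ {a : A →ₗ[R] B} {b : A' →ₗ[R] B'} {f : A →ₗ[R] A'} {g : B →ₗ[R] B'}
    (hcomm : g ∘ₗ a = b ∘ₗ f) : cokerMap a b g hcomm ∘ₗ (range a).mkQ = (range b).mkQ ∘ₗ g :=
  Submodule.mapQ_mkQ _ _ _

lemma surjective_cokerMap {a : A →ₗ[R] B} {b : A' →ₗ[R] B'} {f : A →ₗ[R] A'} {g : B →ₗ[R] B'}
    (hcomm : g ∘ₗ a = b ∘ₗ f) (hg : Surjective g) : Surjective (cokerMap a b g hcomm) := by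
  refine Surjective.of_comp (g := (range a).mkQ) ?_
  rw [← LinearMap.coe_comp, cokerMap_comp_mkQ]
  exact (Submodule.mkQ_surjective _).comp hg

lemma exact_cokerMap {A'' B'' : Type*} [AddCommGroup A''] [Module R A''] [AddCommGroup B'']
    [Module R B''] {a : A →ₗ[R] B} {a' : A' →ₗ[R] B'} {a'' : A'' →ₗ[R] B''}
    {f : A →ₗ[R] A'} {f' : A' →ₗ[R] A''} {g : B →ₗ[R] B'} {g' : B' →ₗ[R] B''}
    (hcomm : g ∘ₗ a = a' ∘ₗ f) (hcomm' : g' ∘ₗ a' = a'' ∘ₗ f') (hf' : Surjective f')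
    (hg : Exact g g') : Exact (cokerMap a a' g hcomm) (cokerMap a' a'' g' hcomm') := by
  refine (hg.exact_mapQ_iff _ _).mpr (inf_le_right.trans ?_)
  rw [← range_comp, hcomm', range_comp_of_range_eq_top _ (range_eq_top.mpr hf')]

end Cokernel

section Dual

variable {R : Type*} [CommRing R]

lemma Function.Exact.dualMap {M₁ M₂ M₃ : Type*} [AddCommGroup M₁] [Module R M₁]
    [AddCommGroup M₂] [Module R M₂] [AddCommGroup M₃] [Module R M₃]
    {f : M₁ →ₗ[R] M₂} {g : M₂ →ₗ[R] M₃} (hfg : Exact f g) (hg : Surjective g) :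
    Exact g.dualMap f.dualMap := by
  rw [LinearMap.exact_iff, ker_dualMap_eq_dualAnnihilator_range, ← hfg.linearMap_ker_eq,
    range_dualMap_eq_dualAnnihilator_ker_of_surjective g hg]

variable {M' M M'' P₀' P₁' P₀'' P₁'' : Type*}
  [AddCommGroup M'] [Module R M'] [AddCommGroup M] [Module R M]
  [AddCommGroup M''] [Module R M''] [AddCommGroup P₀'] [Module R P₀']
  [AddCommGroup P₁'] [Module R P₁'] [AddCommGroup P₀''] [Module R P₀'']
  [AddCommGroup P₁''] [Module R P₁'']

lemma surjective_dualMap_inl : Surjective (inl R P₀' P₀'').dualMap :=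
  fun φ ↦ ⟨φ ∘ₗ fst R P₀' P₀'', by ext; simp⟩

lemma exact_dualMap_snd_inl : Exact (snd R P₀' P₀'').dualMap (inl R P₀' P₀'').dualMap :=
  Exact.inl_snd.dualMap snd_surjective

lemma exists_exact_dual_horseshoe {i : M' →ₗ[R] M} {u' : P₁' →ₗ[R] P₀'} {f' : P₀' →ₗ[R] M'}
    {u'' : P₁'' →ₗ[R] P₀''} {h : P₁'' →ₗ[R] P₀'} {f : P₀' × P₀'' →ₗ[R] M}
    (hf' : Surjective f') (huf' : Exact u' f') (hf : Surjective f)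
    (huf : Exact (horseshoeMap u' u'' h) f) (hfi : f ∘ₗ inl R P₀' P₀'' = i ∘ₗ f') :
    ∃ (δ : Dual R M' →ₗ[R] Dual R P₁'' ⧸ range u''.dualMap)
      (d₁ : (Dual R P₁'' ⧸ range u''.dualMap) →ₗ[R]
        Dual R (P₁' × P₁'') ⧸ range (horseshoeMap u' u'' h).dualMap)
      (d₂ : (Dual R (P₁' × P₁'') ⧸ range (horseshoeMap u' u'' h).dualMap) →ₗ[R]
        Dual R P₁' ⧸ range u'.dualMap),
      Exact i.dualMap δ ∧ Exact δ d₁ ∧ Exact d₁ d₂ ∧ Surjective d₂ := by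
  have hsnd : (snd R P₁' P₁'').dualMap ∘ₗ u''.dualMap =
      (horseshoeMap u' u'' h).dualMap ∘ₗ (snd R P₀' P₀'').dualMap := by
    rw [dualMap_comp_dualMap, dualMap_comp_dualMap, snd_comp_horseshoeMap]
  have hinl : (inl R P₁' P₁'').dualMap ∘ₗ (horseshoeMap u' u'' h).dualMap =
      u'.dualMap ∘ₗ (inl R P₀' P₀'').dualMap := by
    rw [dualMap_comp_dualMap, dualMap_comp_dualMap, horseshoeMap_comp_inl]
  have hfi' : (inl R P₀' P₀'').dualMap ∘ₗ f.dualMap = f'.dualMap ∘ₗ i.dualMap := by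
    rw [dualMap_comp_dualMap, dualMap_comp_dualMap, hfi]
  -- Snake lemma for the rows `P₀''* → P₀* → P₀'*` over `P₁''* → P₁* → P₁'*`, whose columns have
  -- kernels `M''*, M*, M'*` (via `f''*, f*, f'*`) and cokernels the three Auslander duals.
  refine ⟨SnakeLemma.δ' _ _ _ _ _ exact_dualMap_snd_inl _ _ exact_dualMap_snd_inl hsnd hinl _
    (huf'.dualMap hf') _ (exact_map_mkQ_range _) surjective_dualMap_inl
    (dualMap_injective_of_surjective snd_surjective),
    cokerMap _ _ _ hsnd, cokerMap _ _ _ hinl, ?_, ?_, exact_cokerMap hsnd hinl surjective_dualMap_inl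
    exact_dualMap_snd_inl, surjective_cokerMap hinl surjective_dualMap_inl⟩
  · apply SnakeLemma.exact_δ'_right (hι₂ := huf.dualMap hf) (hF := hfi')
      (h := dualMap_injective_of_surjective hf')
  · apply SnakeLemma.exact_δ'_left (hπ₂ := exact_map_mkQ_range _) (hF := cokerMap_comp_mkQ hsnd)
      (h := Submodule.mkQ_surjective _)

end Dual

lemma isAuslanderDual_of_presentation {R : Type u} [CommRing R] {M : ModuleCat.{u} R}
    {P₁ P₀ : Type u} [AddCommGroup P₁] [Module R P₁] [Module.Finite R P₁] [Projective R P₁]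
    [AddCommGroup P₀] [Module R P₀] [Module.Finite R P₀] [Projective R P₀]
    {u : P₁ →ₗ[R] P₀} {f : P₀ →ₗ[R] M} (hf : Surjective f) (huf : Exact u f) :
    IsAuslanderDual R M (.of R (Dual R P₁ ⧸ range u.dualMap)) :=
  ⟨.of R P₁, .of R P₀, u, f, ‹_›, ‹_›, ‹_›, ‹_›, hf, huf, ⟨.refl R _⟩⟩

theorem auslander_dual_six_term_exact_sequence_general
    (R : Type u) [CommRing R] [IsNoetherianRing R]
    (M' M M'' : ModuleCat.{u} R)
    [Module.Finite R M'] [Module.Finite R M'']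
    (i : M' →ₗ[R] M) (p : M →ₗ[R] M'')
    (hi : Function.Injective i) (hp : Function.Surjective p)
    (hip : Function.Exact i p) :
    ∃ (D'' D D' : ModuleCat.{u} R),
      IsAuslanderDual R M'' D'' ∧ IsAuslanderDual R M D ∧ IsAuslanderDual R M' D' ∧
      ∃ (δ : Module.Dual R M' →ₗ[R] D'') (d1 : D'' →ₗ[R] D) (d2 : D →ₗ[R] D'),
        Function.Injective p.dualMap ∧
        Function.Exact p.dualMap i.dualMap ∧
        Function.Exact i.dualMap δ ∧
        Function.Exact δ d1 ∧
        Function.Exact d1 d2 ∧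
        Function.Surjective d2 := by
  have := finitePresentation_of_finite R M'
  have := finitePresentation_of_finite R M''
  obtain ⟨_, _, f', u', hf', huf'⟩ := FinitePresentation.exists_fin' R M'
  obtain ⟨_, _, f'', u'', hf'', huf''⟩ := FinitePresentation.exists_fin' R M''
  obtain ⟨g, h, hg, hh⟩ := exists_horseshoe_lifts hip hp hf' huf''
  have hf := surjective_coprod_of_comp_eq hip hf' hf'' hg
  have huf := exact_horseshoeMap_coprod hi hip huf' huf'' hg hh
  obtain ⟨δ, d₁, d₂, hiδ, hδd₁, hd₁d₂, hd₂⟩ :=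
    exists_exact_dual_horseshoe hf' huf' hf huf (coprod_inl _ _)
  exact ⟨_, _, _, isAuslanderDual_of_presentation hf'' huf'', isAuslanderDual_of_presentation hf huf,
    isAuslanderDual_of_presentation hf' huf', δ, d₁, d₂, dualMap_injective_of_surjective hp,
    hip.dualMap hp, hiδ, hδd₁, hd₁d₂, hd₂⟩

/-- Given a short exact sequence, for suitable choices of Auslander duals there is an
exact sequence `0 → (M'')* → M* → (M')* → D(M'') → D(M) → D(M') → 0`. -/
theorem auslander_dual_six_term_exact_sequence
    (R : Type u) [CommRing R] [IsNoetherianRing R]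
    (M' M M'' : ModuleCat.{u} R)
    [Module.Finite R M'] [Module.Finite R M] [Module.Finite R M'']
    (i : M' →ₗ[R] M) (p : M →ₗ[R] M'')
    (hi : Function.Injective i) (hp : Function.Surjective p)
    (hip : Function.Exact i p) :
    ∃ (D'' D D' : ModuleCat.{u} R),
      IsAuslanderDual R M'' D'' ∧ IsAuslanderDual R M D ∧ IsAuslanderDual R M' D' ∧
      ∃ (δ : Module.Dual R M' →ₗ[R] D'') (d1 : D'' →ₗ[R] D) (d2 : D →ₗ[R] D'),
        Function.Injective p.dualMap ∧
        Function.Exact p.dualMap i.dualMap ∧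
        Function.Exact i.dualMap δ ∧
        Function.Exact δ d1 ∧
        Function.Exact d1 d2 ∧
        Function.Surjective d2 :=
  auslander_dual_six_term_exact_sequence_general R M' M M'' i p hi hp hip
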